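/- In base b dismal arithmetic, σ_b(n) = n if and only if n ≡ b−1 (mod b), where σ_b(n) is the dismal sum of all dismal divisors of n. Moreover, if len_b(n) = k then n ≤ σ_b(n) ≤ b^k − 1 (ordinary integer inequalities). -/

import Mathlib

/-- The `i`-th base-`b` digit of `n`. -/
def digit (b n i : ℕ) : ℕ := n / b ^ i % b

/-- Dismal addition in base `b`: digitwise maximum of base-`b` digits. -/
def dadd (b m n : ℕ) : ℕ :=
  ∑ i ∈ Finset.range (m + n + 1), max (digit b m i) (digit b n i) * b ^ i

/-- Dismal multiplication in base `b`: digit convolution with `min` as digit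
product and `max` as digit sum (no carries). -/
def dmul (b m n : ℕ) : ℕ :=
  ∑ k ∈ Finset.range (m + n + 1),
    ((Finset.range (k + 1)).sup fun i => min (digit b m i) (digit b n (k - i))) * b ^ k

/-- The number of base-`b` digits of `n`. -/
def dlen (b n : ℕ) : ℕ := (Nat.digits b n).length

/-- `p` dismally divides `n` in base `b`. -/
def DDvd (b p n : ℕ) : Prop := ∃ q, dmul b p q = n

open scoped Classical in
/-- The finite set of dismal divisors of `n` (every dismal divisor of a
nonzero `n` has at most `dlen b n` digits). -/
noncomputable def ddivisors (b n : ℕ) : Finset ℕ :=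
  (Finset.range (b ^ dlen b n)).filter fun p => DDvd b p n

/-- The dismal sum of a finite set of numbers: digitwise supremum. -/
def ddigitSum (b : ℕ) (S : Finset ℕ) : ℕ :=
  ∑ i ∈ Finset.range (S.sup id + 1), (S.sup fun p => digit b p i) * b ^ i

/-- The dismal sum of all dismal divisors of `n`. -/
noncomputable def dsigma (b n : ℕ) : ℕ := ddigitSum b (ddivisors b n)

/-!
The `i`-th digit of `σ_b(n)` is the largest `i`-th digit of a dismal divisor of `n`, and
comparing numbers digit by digit does the rest. Since `n = n ⊠ (b - 1)`, `n` is a divisor, so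
`n ≤ σ_b(n)`; every divisor is `< b ^ len_b n`, so `σ_b(n)` has no more digits than `n`; and since
`b - 1 = (b - 1) ⊠ n` is a divisor, the last digit of `σ_b(n)` is `b - 1`. Conversely, if `n` ends
in `b - 1` and `p ⊠ q = n`, then `q` ends in `b - 1` too, so the `k`-th digit of `n` is at least
`min (p_k, q_0) = p_k`: every divisor is digitwise below `n`, whence `σ_b(n) ≤ n`.
-/

open Finset

section Digits

variable {b : ℕ}

lemma digit_lt (hb : 0 < b) (n i : ℕ) : digit b n i < b :=
  Nat.mod_lt _ hb

lemma digit_zero (n : ℕ) : digit b n 0 = n % b := by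
  simp [digit]

lemma digit_eq_zero_of_lt_pow {n i : ℕ} (h : n < b ^ i) : digit b n i = 0 := by
  rw [digit, Nat.div_eq_of_lt h, Nat.zero_mod]

lemma pow_le_of_digit_ne_zero {n i : ℕ} (h : digit b n i ≠ 0) : b ^ i ≤ n :=
  not_lt.1 fun hlt => h (digit_eq_zero_of_lt_pow hlt)

lemma digit_div_pow (n k i : ℕ) : digit b (n / b ^ k) i = digit b n (i + k) := by
  rw [digit, digit, Nat.div_div_eq_div_mul, ← pow_add, add_comm k]

lemma sum_digit_mul_pow (n m : ℕ) :
    ∑ i ∈ range m, digit b n i * b ^ i = n % b ^ m := by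
  induction m with
  | zero => simp [Nat.mod_one]
  | succ m ih =>
    rw [sum_range_succ, ih, pow_succ, Nat.mod_mul, digit]
    ring

lemma sum_digit_mul_pow_of_lt {n m : ℕ} (h : n < b ^ m) :
    ∑ i ∈ range m, digit b n i * b ^ i = n := by
  rw [sum_digit_mul_pow, Nat.mod_eq_of_lt h]

lemma digit_sum_mul_pow {c : ℕ → ℕ} (hc : ∀ i, c i < b) (m j : ℕ) :
    digit b (∑ i ∈ range m, c i * b ^ i) j = if j < m then c j else 0 := by
  induction m generalizing c j with
  | zero => simp [digit]
  | succ m ih =>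
    have hb : 0 < b := (Nat.zero_le _).trans_lt (hc 0)
    have hsplit : ∑ i ∈ range (m + 1), c i * b ^ i
        = c 0 + b * ∑ i ∈ range m, c (i + 1) * b ^ i := by
      rw [sum_range_succ', mul_sum, add_comm, pow_zero, mul_one]
      congr 1
      exact sum_congr rfl fun i _ => by ring
    have hdiv : (c 0 + b * ∑ i ∈ range m, c (i + 1) * b ^ i) / b
        = ∑ i ∈ range m, c (i + 1) * b ^ i := by
      rw [Nat.add_mul_div_left _ _ hb, Nat.div_eq_of_lt (hc 0), zero_add]
    rw [hsplit]
    cases j with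
    | zero => simp [digit_zero, Nat.add_mul_mod_self_left, Nat.mod_eq_of_lt (hc 0)]
    | succ j =>
      rw [← digit_div_pow _ 1, pow_one, hdiv, ih (fun i => hc (i + 1))]
      simp

lemma lt_pow_of_le (hb : 1 < b) {n k : ℕ} (h : n ≤ k) : n < b ^ k :=
  (Nat.lt_pow_self hb).trans_le (Nat.pow_le_pow_right (by omega) h)

lemma le_of_digit_le (hb : 1 < b) {m n : ℕ} (h : ∀ i, digit b m i ≤ digit b n i) : m ≤ n := by
  have hm : m < b ^ (m + n) := lt_pow_of_le hb (by omega)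
  have hn : n < b ^ (m + n) := lt_pow_of_le hb (by omega)
  calc m = ∑ i ∈ range (m + n), digit b m i * b ^ i := (sum_digit_mul_pow_of_lt hm).symm
    _ ≤ ∑ i ∈ range (m + n), digit b n i * b ^ i :=
      sum_le_sum fun i _ => Nat.mul_le_mul_right _ (h i)
    _ = n := sum_digit_mul_pow_of_lt hn

lemma lt_pow_of_digit_eq_zero (hb : 1 < b) {m L : ℕ} (h : ∀ i, L ≤ i → digit b m i = 0) :
    m < b ^ L := by
  have hdiv : m / b ^ L = 0 :=
    Nat.eq_zero_of_le_zero <| le_of_digit_le hb fun i => by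
      rw [digit_div_pow, h _ (Nat.le_add_left _ _), digit_eq_zero_of_lt_pow (by positivity)]
  exact (Nat.div_eq_zero_iff.1 hdiv).resolve_left (by positivity)

lemma digit_pred_self_zero (hb : 0 < b) : digit b (b - 1) 0 = b - 1 := by
  rw [digit_zero, Nat.mod_eq_of_lt (by omega)]

lemma digit_pred_self_of_pos (hb : 0 < b) {j : ℕ} (hj : 0 < j) : digit b (b - 1) j = 0 :=
  digit_eq_zero_of_lt_pow <| (Nat.sub_lt hb one_pos).trans_le <|
    (pow_one b).symm.le.trans (Nat.pow_le_pow_right hb hj)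

end Digits

section DismalProduct

variable {b : ℕ}

def dmulDigit (b m n k : ℕ) : ℕ :=
  (range (k + 1)).sup fun i => min (digit b m i) (digit b n (k - i))

lemma dmul_eq_sum (m n : ℕ) :
    dmul b m n = ∑ k ∈ range (m + n + 1), dmulDigit b m n k * b ^ k := rfl

lemma dmulDigit_lt (hb : 0 < b) (m n k : ℕ) : dmulDigit b m n k < b :=
  (Finset.sup_lt_iff (bot_lt_iff_ne_bot.2 hb.ne')).2 fun i _ =>
    (min_le_left _ _).trans_lt (digit_lt hb m i)

lemma min_digit_le_dmulDigit (m n : ℕ) {i k : ℕ} (hi : i ≤ k) :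
    min (digit b m i) (digit b n (k - i)) ≤ dmulDigit b m n k :=
  le_sup (f := fun i => min (digit b m i) (digit b n (k - i)))
    (mem_range.2 (Nat.lt_succ_of_le hi))

lemma dmulDigit_zero (m n : ℕ) : dmulDigit b m n 0 = min (digit b m 0) (digit b n 0) := by
  simp [dmulDigit]

lemma digit_dmul (hb : 0 < b) {m n k : ℕ} (hk : k < m + n + 1) :
    digit b (dmul b m n) k = dmulDigit b m n k := by
  rw [dmul_eq_sum, digit_sum_mul_pow (dmulDigit_lt hb m n), if_pos hk]

lemma dmulDigit_pred_right (hb : 0 < b) (n k : ℕ) : dmulDigit b n (b - 1) k = digit b n k := by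
  refine le_antisymm (Finset.sup_le fun i hi => ?_) ?_
  · rcases (Nat.lt_succ_iff.1 (mem_range.1 hi)).eq_or_lt with rfl | hlt
    · exact min_le_left _ _
    · simp [digit_pred_self_of_pos hb (Nat.sub_pos_of_lt hlt)]
  · have := min_digit_le_dmulDigit (b := b) n (b - 1) (le_refl k)
    rwa [Nat.sub_self, digit_pred_self_zero hb,
      min_eq_left (Nat.le_sub_one_of_lt (digit_lt hb n k))] at this

lemma dmulDigit_pred_left (hb : 0 < b) (n k : ℕ) : dmulDigit b (b - 1) n k = digit b n k := by
  refine le_antisymm (Finset.sup_le fun i _ => ?_) ?_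
  · rcases Nat.eq_zero_or_pos i with rfl | hi
    · exact min_le_right _ _
    · simp [digit_pred_self_of_pos hb hi]
  · have := min_digit_le_dmulDigit (b := b) (b - 1) n (Nat.zero_le k)
    rwa [Nat.sub_zero, digit_pred_self_zero hb,
      min_eq_right (Nat.le_sub_one_of_lt (digit_lt hb n k))] at this

lemma dmul_pred_right (hb : 1 < b) (n : ℕ) : dmul b n (b - 1) = n := by
  rw [dmul_eq_sum]
  simp_rw [dmulDigit_pred_right (Nat.zero_lt_of_lt hb)]
  exact sum_digit_mul_pow_of_lt (lt_pow_of_le hb (by omega))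

lemma dmul_pred_left (hb : 1 < b) (n : ℕ) : dmul b (b - 1) n = n := by
  rw [dmul_eq_sum]
  simp_rw [dmulDigit_pred_left (Nat.zero_lt_of_lt hb)]
  exact sum_digit_mul_pow_of_lt (lt_pow_of_le hb (by omega))

lemma digit_le_of_ddvd (hb : 0 < b) {p n : ℕ} (h : DDvd b p n) (hn : n % b = b - 1) (k : ℕ) :
    digit b p k ≤ digit b n k := by
  obtain ⟨q, rfl⟩ := h
  have hq0 : digit b q 0 = b - 1 := by
    rw [← digit_zero, digit_dmul hb (by omega), dmulDigit_zero] at hn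
    have := digit_lt hb p 0
    have := digit_lt hb q 0
    omega
  by_cases hpk : digit b p k = 0
  · exact hpk ▸ Nat.zero_le _
  have hk : k < p + q + 1 := by
    have hb1 : 1 < b := by have := digit_lt hb p k; omega
    have := (Nat.lt_pow_self (n := k) hb1).trans_le (pow_le_of_digit_ne_zero hpk)
    omega
  have := min_digit_le_dmulDigit (b := b) p q (le_refl k)
  rwa [Nat.sub_self, hq0, min_eq_left (Nat.le_sub_one_of_lt (digit_lt hb p k)),
    ← digit_dmul hb hk] at this

end DismalProduct

section DismalSigma

variable {b : ℕ}

lemma mem_ddivisors {p n : ℕ} : p ∈ ddivisors b n ↔ p < b ^ dlen b n ∧ DDvd b p n := by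
  classical
  simp [ddivisors]

lemma self_mem_ddivisors (hb : 1 < b) (n : ℕ) : n ∈ ddivisors b n :=
  mem_ddivisors.2 ⟨Nat.lt_base_pow_length_digits hb, b - 1, dmul_pred_right hb n⟩

lemma pred_mem_ddivisors (hb : 1 < b) {n : ℕ} (hn : n ≠ 0) : b - 1 ∈ ddivisors b n := by
  have hlen : 1 ≤ dlen b n := List.length_pos_iff.2 (Nat.digits_ne_nil_iff_ne_zero.2 hn)
  refine mem_ddivisors.2 ⟨?_, n, dmul_pred_left hb n⟩
  calc b - 1 < b ^ 1 := by rw [pow_one]; omega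
    _ ≤ b ^ dlen b n := Nat.pow_le_pow_right (by omega) hlen

lemma digit_ddigitSum (hb : 1 < b) (S : Finset ℕ) (i : ℕ) :
    digit b (ddigitSum b S) i = S.sup fun p => digit b p i := by
  have hlt : ∀ i, (S.sup fun p => digit b p i) < b := fun i =>
    (Finset.sup_lt_iff (bot_lt_iff_ne_bot.2 (by omega : b ≠ 0))).2 fun p _ =>
      digit_lt (by omega) p i
  rw [ddigitSum, digit_sum_mul_pow hlt, ite_eq_left_iff]
  refine fun hi => ((Finset.sup_eq_bot_iff _ S).2 fun p hp => ?_).symm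
  have hp : p ≤ S.sup id := le_sup (f := id) hp
  exact digit_eq_zero_of_lt_pow <| lt_pow_of_le hb (by omega)

lemma self_le_dsigma (hb : 1 < b) (n : ℕ) : n ≤ dsigma b n :=
  le_of_digit_le hb fun i => by
    rw [dsigma, digit_ddigitSum hb]
    exact le_sup (f := fun p => digit b p i) (self_mem_ddivisors hb n)

lemma dsigma_lt_pow_dlen (hb : 1 < b) (n : ℕ) : dsigma b n < b ^ dlen b n :=
  lt_pow_of_digit_eq_zero hb fun i hi => by
    rw [dsigma, digit_ddigitSum hb]
    refine (Finset.sup_eq_bot_iff _ _).2 fun p hp => digit_eq_zero_of_lt_pow ?_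
    exact (mem_ddivisors.1 hp).1.trans_le (Nat.pow_le_pow_right (by omega) hi)

lemma dsigma_mod_base (hb : 1 < b) {n : ℕ} (hn : n ≠ 0) : dsigma b n % b = b - 1 := by
  have hlower : b - 1 ≤ digit b (dsigma b n) 0 := by
    rw [dsigma, digit_ddigitSum hb, ← digit_pred_self_zero (by omega : 0 < b)]
    exact le_sup (f := fun p => digit b p 0) (pred_mem_ddivisors hb hn)
  have := digit_lt (by omega : 0 < b) (dsigma b n) 0
  rw [← digit_zero]
  omega

lemma dsigma_le_self (hb : 1 < b) {n : ℕ} (hn : n % b = b - 1) : dsigma b n ≤ n :=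
  le_of_digit_le hb fun i => by
    rw [dsigma, digit_ddigitSum hb]
    exact Finset.sup_le fun p hp => digit_le_of_ddvd (by omega) (mem_ddivisors.1 hp).2 hn i

end DismalSigma

/-- `σ_b(n) = n` iff `n ≡ b - 1 (mod b)`; moreover
`n ≤ σ_b(n) ≤ b^(len_b n) - 1`. -/
theorem dismal_sigma (b : ℕ) (hb : 2 ≤ b) (n : ℕ) (hn : 0 < n) :
    (dsigma b n = n ↔ n % b = b - 1) ∧
    n ≤ dsigma b n ∧ dsigma b n ≤ b ^ dlen b n - 1 := by
  have hle : n ≤ dsigma b n := self_le_dsigma hb n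
  refine ⟨⟨fun h => h ▸ dsigma_mod_base hb hn.ne', fun h => (dsigma_le_self hb h).antisymm hle⟩,
    hle, Nat.le_sub_one_of_lt (dsigma_lt_pow_dlen hb n)⟩
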